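/- Let λ″ > 0 and μ, λ be real. For every ε with 0 < ε < λ″ there exists C_ε > 0 such that Re⟨H_{λ″} φ, φ⟩ ≥ (λ″ − ε) ⟨G φ, φ⟩ − C_ε ‖φ‖² for all φ ∈ D(G); in particular Re⟨H_{λ″} φ, φ⟩ ≥ −C_ε ‖φ‖² for all φ ∈ D(G). -/

import Mathlib

/-!
The Bargmann space is modelled by a Hilbert basis `e n` (standing for `zⁿ/√n!`) and the operators
by their action on coefficients `c n`. There `G` and `μ a*a` are diagonal with eigenvalues
`n(n-1)(n-2)` and `μ n`, while `a*(a + a*)a = a*a² + a*²a` is symmetric, so `iλ a*(a + a*)a`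
does not contribute to the real part of the form:
`Re⟨H_{λ″}φ, φ⟩ = ∑ (λ″ n(n-1)(n-2) + μ n) |c n|²`.
Since `ε n(n-1)(n-2) + μ n → ∞`, it is bounded below by some `-C_ε`, which gives the estimate
term by term. For `φ ∈ D(G)` the weighted sum `∑ (n+1)⁴ |c n|²` is finite, which is what puts
`φ` into the domain of `H_{λ″}`.
-/

noncomputable section

open Filter Topology MeasureTheory
open scoped InnerProductSpace ComplexInnerProductSpace

/-- Eigenvalues of `G = a*³a³` : `λ_n = n(n-1)(n-2)`. -/
def gEig (n : ℕ) : ℝ := (n : ℝ) * ((n : ℝ) - 1) * ((n : ℝ) - 2)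

/-- Basis coefficients of `H_{μ,λ} φ`, where `φ` has basis coefficients `c`:
`(H_{μ,λ} φ)_m = μ m c_m + iλ ( m √(m+1) c_{m+1} + (m-1) √m c_{m-1} )`
(coming from `H_{μ,λ} e_n = iλ(n-1)√n e_{n-1} + μ n e_n + iλ n √(n+1) e_{n+1}`). -/
def hCoef (μ lam : ℝ) (c : ℕ → ℂ) (m : ℕ) : ℂ :=
  (μ : ℂ) * (m : ℂ) * c m +
    Complex.I * (lam : ℂ) *
      ((m : ℂ) * (Real.sqrt (m + 1) : ℂ) * c (m + 1) +
        ((m : ℂ) - 1) * (Real.sqrt m : ℂ) * c (m - 1))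

/-- Basis coefficients of `H_{λ″} φ = (λ″ G + H_{μ,λ}) φ`. -/
def hlCoef (l'' μ lam : ℝ) (c : ℕ → ℂ) (m : ℕ) : ℂ :=
  (l'' : ℂ) * (gEig m : ℂ) * c m + hCoef μ lam c m

open ComplexConjugate

theorem memℓp_two_iff_summable_sq {ι E : Type*} [NormedAddCommGroup E] {f : ι → E} :
    Memℓp f 2 ↔ Summable fun i => ‖f i‖ ^ 2 := by
  rw [memℓp_gen_iff (by norm_num)]
  norm_num

theorem memℓp_nat_add_one_iff {E : Type*} [NormedAddCommGroup E] {p : ENNReal}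
    (hp : 0 < p.toReal) {f : ℕ → E} : Memℓp (fun n => f (n + 1)) p ↔ Memℓp f p := by
  simp only [memℓp_gen_iff hp]
  exact summable_nat_add_iff (f := fun n => ‖f n‖ ^ p.toReal) 1

theorem Memℓp.summable_conj_mul {ι 𝕜 : Type*} [RCLike 𝕜] {f g : ι → 𝕜} (hf : Memℓp f 2)
    (hg : Memℓp g 2) : Summable fun i => conj (f i) * g i := by
  simpa only [RCLike.inner_apply'] using
    lp.summable_inner (𝕜 := 𝕜) (⟨f, hf⟩ : lp (fun _ => 𝕜) 2) ⟨g, hg⟩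

theorem HilbertBasis.inner_eq_tsum_conj_mul {ι 𝕜 E : Type*} [RCLike 𝕜] [NormedAddCommGroup E]
    [InnerProductSpace 𝕜 E] (b : HilbertBasis ι 𝕜 E) (x y : E) :
    ⟪x, y⟫_𝕜 = ∑' i, conj (b.repr x i) * b.repr y i := by
  simp only [← b.repr.inner_map_map, lp.inner_eq_tsum, RCLike.inner_apply']

theorem HilbertBasis.hasSum_norm_repr_sq {ι 𝕜 E : Type*} [RCLike 𝕜] [NormedAddCommGroup E]
    [InnerProductSpace 𝕜 E] (b : HilbertBasis ι 𝕜 E) (x : E) :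
    HasSum (fun i => ‖b.repr x i‖ ^ 2) (‖x‖ ^ 2) := by
  simpa [b.repr.norm_map] using lp.hasSum_norm (p := 2) (by norm_num) (b.repr x)

theorem hasSum_mul_norm_sq {ι : Type*} {d : ι → ℝ} {c : ι → ℂ} (hc : Memℓp c 2)
    (hdc : Memℓp (fun i => (d i : ℂ) * c i) 2) :
    HasSum (fun i => d i * ‖c i‖ ^ 2) (∑' i, conj (c i) * (d i * c i)).re := by
  have hterm (i : ι) : conj (c i) * (d i * c i) = ((d i * ‖c i‖ ^ 2 : ℝ) : ℂ) := by
    rw [mul_left_comm, Complex.conj_mul']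
    push_cast
    rfl
  simpa only [hterm, Complex.ofReal_re] using Complex.hasSum_re (hc.summable_conj_mul hdc).hasSum

theorem gEig_nonneg (n : ℕ) : 0 ≤ gEig n := by
  rcases n with _ | _ | _ | n
  all_goals simp only [gEig]; push_cast; ring_nf; positivity

theorem add_one_sq_le_gEig_add_sixteen (n : ℕ) : ((n : ℝ) + 1) ^ 2 ≤ gEig n + 16 := by
  have hn : (0 : ℝ) ≤ n := n.cast_nonneg
  simp only [gEig]
  nlinarith [mul_nonneg hn (sq_nonneg ((n : ℝ) - 8 / 3)), sq_nonneg ((n : ℝ) - 8 / 3)]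

theorem tendsto_mul_gEig_add_mul_atTop {ε : ℝ} (hε : 0 < ε) (μ : ℝ) :
    Tendsto (fun n : ℕ => ε * gEig n + μ * n) atTop atTop := by
  have hx : Tendsto (fun x : ℝ => x * (ε * ((x - 1) * (x - 2)) + μ)) atTop atTop := by
    refine tendsto_id.atTop_mul_atTop₀ (tendsto_atTop_add_const_right _ μ ?_)
    refine Tendsto.const_mul_atTop hε (Tendsto.atTop_mul_atTop₀ ?_ ?_)
    · exact tendsto_atTop_add_const_right _ (-1) tendsto_id
    · exact tendsto_atTop_add_const_right _ (-2) tendsto_id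
  refine (hx.comp tendsto_natCast_atTop_atTop).congr fun n => ?_
  simp only [Function.comp, gEig]
  ring

theorem exists_pos_forall_neg_le_mul_gEig_add_mul {ε : ℝ} (hε : 0 < ε) (μ : ℝ) :
    ∃ C > 0, ∀ n : ℕ, -C ≤ ε * gEig n + μ * n := by
  obtain ⟨b, hb⟩ := bddBelow_range_of_tendsto_atTop_atTop (tendsto_mul_gEig_add_mul_atTop hε μ)
  refine ⟨|b| + 1, by positivity, fun n => ?_⟩
  have := hb (Set.mem_range_self n)
  linarith [neg_abs_le b]

/-- `lowerCoef c` and `raiseCoef c` are the coefficients of `a*a²φ` and `a*²aφ` when `φ` has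
coefficients `c`, so that `a*(a + a*)a` acts by `lowerCoef + raiseCoef`. -/
def lowerCoef (c : ℕ → ℂ) (m : ℕ) : ℂ := (m : ℂ) * (Real.sqrt (m + 1) : ℂ) * c (m + 1)

def raiseCoef (c : ℕ → ℂ) (m : ℕ) : ℂ := ((m : ℂ) - 1) * (Real.sqrt m : ℂ) * c (m - 1)

theorem hlCoef_eq (l'' μ lam : ℝ) (c : ℕ → ℂ) (m : ℕ) :
    hlCoef l'' μ lam c m = ((l'' * gEig m + μ * m : ℝ) : ℂ) * c m +
      Complex.I * lam * (lowerCoef c m + raiseCoef c m) := by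
  simp only [hlCoef, hCoef, lowerCoef, raiseCoef]
  push_cast
  ring

theorem raiseCoef_zero (c : ℕ → ℂ) : raiseCoef c 0 = 0 := by
  simp [raiseCoef]

theorem conj_mul_raiseCoef_succ (c : ℕ → ℂ) (m : ℕ) :
    conj (c (m + 1)) * raiseCoef c (m + 1) = conj (conj (c m) * lowerCoef c m) := by
  simp only [raiseCoef, lowerCoef, map_mul, Complex.conj_conj, Complex.conj_ofReal, map_natCast,
    Nat.add_sub_cancel]
  push_cast
  ring

/-- `a*²a` is the adjoint of `a*a²`. -/
theorem HasSum.conj_mul_raiseCoef {c : ℕ → ℂ} {A : ℂ}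
    (h : HasSum (fun m => conj (c m) * lowerCoef c m) A) :
    HasSum (fun m => conj (c m) * raiseCoef c m) (conj A) := by
  rw [← hasSum_nat_add_iff' 1]
  simpa [conj_mul_raiseCoef_succ, raiseCoef_zero] using Complex.hasSum_conj'.2 h

section Weighted

variable {c : ℕ → ℂ}

theorem memℓp_weight_of_memℓp_gEig_mul (hc : Memℓp c 2)
    (hG : Memℓp (fun n => (gEig n : ℂ) * c n) 2) :
    Memℓp (fun n : ℕ => ((n : ℝ) + 1) ^ 2 * ‖c n‖) 2 := by
  refine (hG.norm.add (hc.norm.const_mul 16)).mono fun n => ?_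
  rw [Real.norm_of_nonneg (by positivity), Pi.add_apply, norm_mul, Complex.norm_real,
    Real.norm_of_nonneg (gEig_nonneg n), ← add_mul]
  gcongr
  linarith [add_one_sq_le_gEig_add_sixteen n]

theorem memℓp_natCast_mul (hw : Memℓp (fun n : ℕ => ((n : ℝ) + 1) ^ 2 * ‖c n‖) 2) :
    Memℓp (fun n : ℕ => (n : ℂ) * c n) 2 :=
  hw.mono fun n => by
    rw [norm_mul, Complex.norm_natCast]
    gcongr
    nlinarith

theorem memℓp_lowerCoef (hw : Memℓp (fun n : ℕ => ((n : ℝ) + 1) ^ 2 * ‖c n‖) 2) :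
    Memℓp (lowerCoef c) 2 := by
  refine ((memℓp_nat_add_one_iff (by norm_num)).2 hw).mono fun m => ?_
  have hm : (0 : ℝ) ≤ m := m.cast_nonneg
  have hsqrt : Real.sqrt (m + 1) ≤ m + 1 := Real.sqrt_le_self_iff.2 (Or.inr (by linarith))
  rw [lowerCoef, norm_mul, norm_mul, Complex.norm_natCast, Complex.norm_real,
    Real.norm_of_nonneg (Real.sqrt_nonneg _)]
  gcongr
  push_cast
  nlinarith [Real.sqrt_nonneg ((m : ℝ) + 1)]

theorem memℓp_raiseCoef (hw : Memℓp (fun n : ℕ => ((n : ℝ) + 1) ^ 2 * ‖c n‖) 2) :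
    Memℓp (raiseCoef c) 2 := by
  refine (memℓp_nat_add_one_iff (by norm_num)).1 (hw.mono fun m => ?_)
  have hm : (0 : ℝ) ≤ m := m.cast_nonneg
  have hsqrt : Real.sqrt (m + 1) ≤ m + 1 := Real.sqrt_le_self_iff.2 (Or.inr (by linarith))
  rw [raiseCoef, Nat.add_sub_cancel, norm_mul, norm_mul, Complex.norm_real,
    Real.norm_of_nonneg (Real.sqrt_nonneg _), Nat.cast_add_one, add_sub_cancel_right,
    Complex.norm_natCast]
  gcongr
  push_cast
  nlinarith [Real.sqrt_nonneg ((m : ℝ) + 1)]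

end Weighted

section Quadratic

variable {c : ℕ → ℂ} (l'' μ lam : ℝ)

theorem memℓp_diagCoef (hG : Memℓp (fun n => (gEig n : ℂ) * c n) 2)
    (hw : Memℓp (fun n : ℕ => ((n : ℝ) + 1) ^ 2 * ‖c n‖) 2) :
    Memℓp (fun n => ((l'' * gEig n + μ * n : ℝ) : ℂ) * c n) 2 := by
  convert (hG.const_smul (l'' : ℂ)).add ((memℓp_natCast_mul hw).const_smul (μ : ℂ)) using 1
  funext n
  simp only [Pi.add_apply, Pi.smul_apply, smul_eq_mul]
  push_cast
  ring

theorem memℓp_hlCoef (hc : Memℓp c 2) (hG : Memℓp (fun n => (gEig n : ℂ) * c n) 2) :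
    Memℓp (hlCoef l'' μ lam c) 2 := by
  have hw := memℓp_weight_of_memℓp_gEig_mul hc hG
  convert (memℓp_diagCoef l'' μ hG hw).add
    (((memℓp_lowerCoef hw).add (memℓp_raiseCoef hw)).const_smul (Complex.I * lam)) using 1
  funext n
  simp only [Pi.add_apply, Pi.smul_apply, smul_eq_mul]
  exact hlCoef_eq l'' μ lam c n

theorem hasSum_re_conj_mul_hlCoef (hc : Memℓp c 2)
    (hG : Memℓp (fun n => (gEig n : ℂ) * c n) 2) :
    HasSum (fun n => (l'' * gEig n + μ * n) * ‖c n‖ ^ 2)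
      (∑' n, conj (c n) * hlCoef l'' μ lam c n).re := by
  have hw := memℓp_weight_of_memℓp_gEig_mul hc hG
  have hdiag := hasSum_mul_norm_sq hc (memℓp_diagCoef l'' μ hG hw)
  have hlower := (hc.summable_conj_mul (memℓp_lowerCoef hw)).hasSum
  have hoff := (hlower.add hlower.conj_mul_raiseCoef).mul_left (Complex.I * lam)
  have hsum := (hc.summable_conj_mul (memℓp_diagCoef l'' μ hG hw)).hasSum.add hoff
  rw [(hsum.congr_fun fun n => ?_).tsum_eq]
  · simpa [Complex.add_conj] using hdiag
  · rw [hlCoef_eq]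
    ring

end Quadratic

theorem gribov_Hl_form_lower_bound_general
    {E : Type} [NormedAddCommGroup E] [InnerProductSpace ℂ E]
    (e : HilbertBasis ℕ ℂ E) (l'' μ lam : ℝ) (G Hl : E →ₗ.[ℂ] E)
    (hGdom : ∀ φ : E, φ ∈ G.domain ↔ Summable fun n : ℕ => gEig n ^ 2 * ‖e.repr φ n‖ ^ 2)
    (hGact : ∀ (φ : G.domain) (n : ℕ), e.repr (G φ) n = (gEig n : ℂ) * e.repr (φ : E) n)
    (hHldom : ∀ φ : E,
      φ ∈ Hl.domain ↔ Summable fun m : ℕ => ‖hlCoef l'' μ lam (fun n => e.repr φ n) m‖ ^ 2)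
    (hHlact : ∀ (φ : Hl.domain) (m : ℕ),
      e.repr (Hl φ) m = hlCoef l'' μ lam (fun n => e.repr (φ : E) n) m) :
    ∀ ε : ℝ, 0 < ε → ε < l'' → ∃ C : ℝ, 0 < C ∧
      ∀ φ : G.domain, ∃ h : (φ : E) ∈ Hl.domain,
        (l'' - ε) * (⟪(φ : E), G φ⟫).re - C * ‖(φ : E)‖ ^ 2 ≤
            (⟪(φ : E), Hl ⟨(φ : E), h⟩⟫).re ∧
          -C * ‖(φ : E)‖ ^ 2 ≤ (⟪(φ : E), Hl ⟨(φ : E), h⟩⟫).re := by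
  intro ε hε hεl
  obtain ⟨C, hC, hCle⟩ := exists_pos_forall_neg_le_mul_gEig_add_mul hε μ
  refine ⟨C, hC, fun φ => ?_⟩
  set c : ℕ → ℂ := fun n => e.repr φ n
  have hc : Memℓp c 2 := lp.memℓp _
  have hG : Memℓp (fun n => (gEig n : ℂ) * c n) 2 :=
    memℓp_two_iff_summable_sq.2 (by simpa [c, mul_pow] using (hGdom φ).1 φ.2)
  have hdom : (φ : E) ∈ Hl.domain :=
    (hHldom φ).2 (memℓp_two_iff_summable_sq.1 (memℓp_hlCoef l'' μ lam hc hG))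
  have hHlform : HasSum (fun n => (l'' * gEig n + μ * n) * ‖c n‖ ^ 2)
      (⟪(φ : E), Hl ⟨(φ : E), hdom⟩⟫).re := by
    simpa only [e.inner_eq_tsum_conj_mul, hHlact] using hasSum_re_conj_mul_hlCoef l'' μ lam hc hG
  have hGform : HasSum (fun n => gEig n * ‖c n‖ ^ 2) (⟪(φ : E), G φ⟫).re := by
    simpa only [e.inner_eq_tsum_conj_mul, hGact] using hasSum_mul_norm_sq hc hG
  have hGform_nonneg : 0 ≤ (⟪(φ : E), G φ⟫).re :=
    hGform.nonneg fun n => mul_nonneg (gEig_nonneg n) (sq_nonneg _)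
  have hbound : (l'' - ε) * (⟪(φ : E), G φ⟫).re - C * ‖(φ : E)‖ ^ 2 ≤
      (⟪(φ : E), Hl ⟨(φ : E), hdom⟩⟫).re :=
    hasSum_le (fun n => by nlinarith [hCle n, sq_nonneg ‖c n‖])
      ((hGform.mul_left _).sub ((e.hasSum_norm_repr_sq φ).mul_left C)) hHlform
  exact ⟨hdom, hbound, by nlinarith⟩

/-- Let `λ″ > 0` and `μ, λ` real.  For every `0 < ε < λ″` there is
`C_ε > 0` with `Re⟨H_{λ″} φ, φ⟩ ≥ (λ″ - ε) ⟨G φ, φ⟩ - C_ε ‖φ‖²` for all `φ ∈ D(G)`;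
in particular `Re⟨H_{λ″} φ, φ⟩ ≥ -C_ε ‖φ‖²` on `D(G)`. -/
theorem gribov_Hl_form_lower_bound
    {E : Type} [NormedAddCommGroup E] [InnerProductSpace ℂ E] [CompleteSpace E]
    (e : HilbertBasis ℕ ℂ E) (l'' μ lam : ℝ) (hl'' : 0 < l'') (G Hl : E →ₗ.[ℂ] E)
    (hGdom : ∀ φ : E, φ ∈ G.domain ↔ Summable fun n : ℕ => gEig n ^ 2 * ‖e.repr φ n‖ ^ 2)
    (hGact : ∀ (φ : G.domain) (n : ℕ), e.repr (G φ) n = (gEig n : ℂ) * e.repr (φ : E) n)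
    (hHldom : ∀ φ : E,
      φ ∈ Hl.domain ↔ Summable fun m : ℕ => ‖hlCoef l'' μ lam (fun n => e.repr φ n) m‖ ^ 2)
    (hHlact : ∀ (φ : Hl.domain) (m : ℕ),
      e.repr (Hl φ) m = hlCoef l'' μ lam (fun n => e.repr (φ : E) n) m) :
    ∀ ε : ℝ, 0 < ε → ε < l'' → ∃ C : ℝ, 0 < C ∧
      ∀ φ : G.domain, ∃ h : (φ : E) ∈ Hl.domain,
        (l'' - ε) * (⟪(φ : E), G φ⟫).re - C * ‖(φ : E)‖ ^ 2 ≤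
            (⟪(φ : E), Hl ⟨(φ : E), h⟩⟫).re ∧
          -C * ‖(φ : E)‖ ^ 2 ≤ (⟪(φ : E), Hl ⟨(φ : E), h⟩⟫).re :=
  gribov_Hl_form_lower_bound_general e l'' μ lam G Hl hGdom hGact hHldom hHlact
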